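/- The function h defined by h(x,y,d) = inf{ g(ξ,η,d) : ξ ≥ x, η ≥ y } is continuous on the set Ō = {(x,y,d) ∈ ℝ³ : x ≥ 0, y ≥ 0, xy ≥ |d|}. -/

import Mathlib

/-! Moving the lower corner of the quadrant from `(x', y')` up to `(x, y)` changes the infimum
by at most `|x² - x'²| + |y² - y'²|`: the infimum can only grow, and replacing a competitor
`(ξ, η)` by `(max ξ x, max η y)` raises `ξ² + η²` by at most that much while `A`, increasing
in `x, y` as `λ ≥ 1`, only grows. In `d`, the estimate `|√a - √b| ≤ √|a - b|` makes
`g(ξ, η, ·)` equicontinuous in `(ξ, η)`, so the infimum inherits the same modulus of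
continuity. -/

noncomputable section

def Afun (l x y d : ℝ) : ℝ :=
  (x ^ 2 + y ^ 2) * (l ^ 2 + 1 / l ^ 2) / 2
    + (l ^ 2 - 1 / l ^ 2) * Real.sqrt (x ^ 2 * y ^ 2 - d ^ 2) + 2 * d

def gfun (l x y d : ℝ) : ℝ :=
  x ^ 2 + y ^ 2 + (l ^ 2 + 1 / l ^ 2) - 2 * Real.sqrt (Afun l x y d)

def hfun (l x y d : ℝ) : ℝ :=
  sInf {r | ∃ ξ η : ℝ, x ≤ ξ ∧ y ≤ η ∧ r = gfun l ξ η d}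

open Real Filter

lemma abs_sqrt_sub_sqrt_le (a b : ℝ) : |√a - √b| ≤ √|a - b| := by
  wlog hba : b ≤ a generalizing a b
  · rw [abs_sub_comm, abs_sub_comm a b]
    exact this b a (le_of_not_ge hba)
  have hsq : a ≤ (√b + √(a - b)) ^ 2 := by
    rcases le_total b 0 with hb | hb
    · nlinarith [sq_sqrt (sub_nonneg.2 hba), sqrt_nonneg b, sqrt_nonneg (a - b)]
    · nlinarith [sq_sqrt (sub_nonneg.2 hba), sq_sqrt hb, sqrt_nonneg b, sqrt_nonneg (a - b)]
  have : √a ≤ √b + √(a - b) := (sqrt_le_left (by positivity)).2 hsq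
  rw [abs_of_nonneg (sub_nonneg.2 (sqrt_le_sqrt hba)), abs_of_nonneg (sub_nonneg.2 hba)]
  linarith

lemma sq_sub_sq_min_le_abs (a b : ℝ) : a ^ 2 - min a b ^ 2 ≤ |a ^ 2 - b ^ 2| := by
  rcases min_choice a b with h | h <;> rw [h]
  · simp
  · exact le_abs_self _

lemma sq_max_le_sq_add {ξ x x' : ℝ} (hx' : 0 ≤ x') (hx : x' ≤ x) (hξ : x' ≤ ξ) :
    max ξ x ^ 2 ≤ ξ ^ 2 + (x ^ 2 - x' ^ 2) := by
  rcases max_cases ξ x with ⟨h, -⟩ | ⟨h, -⟩ <;> rw [h] <;> nlinarith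

lemma continuousWithinAt_of_abs_sub_le {X : Type*} [TopologicalSpace X] {f B : X → ℝ}
    {s : Set X} {x₀ : X} (hB : ContinuousAt B x₀) (hB₀ : B x₀ = 0)
    (hf : ∀ x ∈ s, |f x - f x₀| ≤ B x) : ContinuousWithinAt f s x₀ := by
  rw [ContinuousWithinAt, tendsto_iff_dist_tendsto_zero]
  refine squeeze_zero' (Eventually.of_forall fun x => dist_nonneg) ?_
    ((hB₀ ▸ hB.tendsto).mono_left nhdsWithin_le_nhds)
  filter_upwards [self_mem_nhdsWithin] with x hx using (dist_eq _ _).trans_le (hf x hx)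

/-- Modulus of continuity in `d` of `gfun l ξ η`, uniform in `(ξ, η)`, hence also of `hfun l x y`. -/
def modulusD (l d d' : ℝ) : ℝ :=
  2 * √((l ^ 2 - 1 / l ^ 2) * √|d ^ 2 - d' ^ 2| + 2 * |d - d'|)

lemma modulusD_comm (l d d' : ℝ) : modulusD l d d' = modulusD l d' d := by
  simp only [modulusD, abs_sub_comm]

section

variable {l : ℝ} (hl : 1 ≤ l)
include hl

lemma sq_sub_inv_sq_nonneg : 0 ≤ l ^ 2 - 1 / l ^ 2 := by
  have h1 : 1 ≤ l ^ 2 := one_le_pow₀ hl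
  have : 1 / l ^ 2 ≤ 1 := (div_le_one (by positivity)).2 h1
  linarith

lemma Afun_mono {x x' y y' d : ℝ} (hx : 0 ≤ x) (hxx' : x ≤ x') (hy : 0 ≤ y) (hyy' : y ≤ y') :
    Afun l x y d ≤ Afun l x' y' d := by
  have hM := sq_sub_inv_sq_nonneg hl
  unfold Afun
  gcongr

lemma gfun_max_le {x x' y y' d ξ η : ℝ} (hx' : 0 ≤ x') (hx : x' ≤ x) (hy' : 0 ≤ y')
    (hy : y' ≤ y) (hξ : x' ≤ ξ) (hη : y' ≤ η) :
    gfun l (max ξ x) (max η y) d ≤ gfun l ξ η d + (x ^ 2 - x' ^ 2) + (y ^ 2 - y' ^ 2) := by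
  have hA : √(Afun l ξ η d) ≤ √(Afun l (max ξ x) (max η y) d) := sqrt_le_sqrt <|
    Afun_mono hl (hx'.trans hξ) (le_max_left _ _) (hy'.trans hη) (le_max_left _ _)
  have := sq_max_le_sq_add hx' hx hξ
  have := sq_max_le_sq_add hy' hy hη
  unfold gfun
  linarith

lemma Afun_le {ξ η d : ℝ} (hξ : 0 ≤ ξ) (hη : 0 ≤ η) :
    Afun l ξ η d ≤ l ^ 2 * (ξ ^ 2 + η ^ 2) + 2 * |d| := by
  have hM := sq_sub_inv_sq_nonneg hl
  have hroot : √(ξ ^ 2 * η ^ 2 - d ^ 2) ≤ ξ * η :=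
    (sqrt_le_left (by positivity)).2 (by nlinarith [sq_nonneg d])
  have := mul_le_mul_of_nonneg_left hroot hM
  have := le_abs_self d
  unfold Afun
  nlinarith [sq_nonneg (ξ - η)]

lemma gfun_ge {ξ η d : ℝ} (hξ : 0 ≤ ξ) (hη : 0 ≤ η) : (1 - 2 * |d|) / l ^ 2 ≤ gfun l ξ η d := by
  set T := l ^ 2 * (ξ ^ 2 + η ^ 2) + 2 * |d|
  have hl2 : 0 < l ^ 2 := by positivity
  have hT : 0 ≤ T := by positivity
  have hA : √(Afun l ξ η d) ≤ √T := sqrt_le_sqrt (Afun_le hl hξ hη)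
  have hamgm : 2 * √T * l ^ 2 ≤ T + l ^ 2 * l ^ 2 := by
    nlinarith [sq_nonneg (√T - l ^ 2), sq_sqrt hT]
  have hL : (l ^ 2 + 1 / l ^ 2) * l ^ 2 = l ^ 2 * l ^ 2 + 1 := by field_simp
  rw [div_le_iff₀ hl2]
  unfold gfun
  nlinarith [mul_le_mul_of_nonneg_right hA hl2.le]

lemma hfun_le_gfun {x y d ξ η : ℝ} (hx : 0 ≤ x) (hy : 0 ≤ y) (hξ : x ≤ ξ) (hη : y ≤ η) :
    hfun l x y d ≤ gfun l ξ η d := by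
  refine csInf_le ⟨(1 - 2 * |d|) / l ^ 2, ?_⟩ ⟨ξ, η, hξ, hη, rfl⟩
  rintro _ ⟨ξ', η', hξ', hη', rfl⟩
  exact gfun_ge hl (hx.trans hξ') (hy.trans hη')

omit hl in
lemma le_hfun {x y d c : ℝ} (h : ∀ ξ η, x ≤ ξ → y ≤ η → c ≤ gfun l ξ η d) : c ≤ hfun l x y d :=
  le_csInf ⟨_, x, y, le_rfl, le_rfl, rfl⟩ <| by
    rintro _ ⟨ξ, η, hξ, hη, rfl⟩
    exact h ξ η hξ hη

lemma hfun_mono {x x' y y' d : ℝ} (hx' : 0 ≤ x') (hx : x' ≤ x) (hy' : 0 ≤ y') (hy : y' ≤ y) :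
    hfun l x' y' d ≤ hfun l x y d :=
  le_hfun fun _ _ hξ hη => hfun_le_gfun hl hx' hy' (hx.trans hξ) (hy.trans hη)

lemma hfun_le_hfun_add {x x' y y' d : ℝ} (hx' : 0 ≤ x') (hx : x' ≤ x) (hy' : 0 ≤ y')
    (hy : y' ≤ y) : hfun l x y d ≤ hfun l x' y' d + (x ^ 2 - x' ^ 2) + (y ^ 2 - y' ^ 2) := by
  have key : hfun l x y d - (x ^ 2 - x' ^ 2) - (y ^ 2 - y' ^ 2) ≤ hfun l x' y' d := by
    refine le_hfun fun ξ η hξ hη => ?_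
    have := hfun_le_gfun hl (hx'.trans hx) (hy'.trans hy) (le_max_right ξ x) (le_max_right η y)
      (d := d)
    have := gfun_max_le hl hx' hx hy' hy hξ hη (d := d)
    linarith
  linarith

lemma abs_hfun_sub_hfun_le_xy {x x' y y' d : ℝ} (hx : 0 ≤ x) (hx' : 0 ≤ x') (hy : 0 ≤ y)
    (hy' : 0 ≤ y') :
    |hfun l x y d - hfun l x' y' d| ≤ |x ^ 2 - x' ^ 2| + |y ^ 2 - y' ^ 2| := by
  have hm : 0 ≤ min x x' := le_min hx hx'
  have hn : 0 ≤ min y y' := le_min hy hy'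
  have := hfun_mono hl hm (min_le_left x x') hn (min_le_left y y') (d := d)
  have := hfun_mono hl hm (min_le_right x x') hn (min_le_right y y') (d := d)
  have := hfun_le_hfun_add hl hm (min_le_left x x') hn (min_le_left y y') (d := d)
  have := hfun_le_hfun_add hl hm (min_le_right x x') hn (min_le_right y y') (d := d)
  have := sq_sub_sq_min_le_abs x x'
  have := sq_sub_sq_min_le_abs y y'
  have : x' ^ 2 - min x x' ^ 2 ≤ |x ^ 2 - x' ^ 2| := by
    rw [min_comm, abs_sub_comm]; exact sq_sub_sq_min_le_abs x' x
  have : y' ^ 2 - min y y' ^ 2 ≤ |y ^ 2 - y' ^ 2| := by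
    rw [min_comm, abs_sub_comm]; exact sq_sub_sq_min_le_abs y' y
  rw [abs_le]
  constructor <;> linarith

lemma abs_Afun_sub_Afun_le (ξ η d d' : ℝ) :
    |Afun l ξ η d - Afun l ξ η d'| ≤ (l ^ 2 - 1 / l ^ 2) * √|d ^ 2 - d' ^ 2| + 2 * |d - d'| := by
  have hM := sq_sub_inv_sq_nonneg hl
  have hroot := abs_sqrt_sub_sqrt_le (ξ ^ 2 * η ^ 2 - d ^ 2) (ξ ^ 2 * η ^ 2 - d' ^ 2)
  rw [show ξ ^ 2 * η ^ 2 - d ^ 2 - (ξ ^ 2 * η ^ 2 - d' ^ 2) = -(d ^ 2 - d' ^ 2) by ring,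
    abs_neg] at hroot
  calc |Afun l ξ η d - Afun l ξ η d'|
      = |(l ^ 2 - 1 / l ^ 2) * (√(ξ ^ 2 * η ^ 2 - d ^ 2) - √(ξ ^ 2 * η ^ 2 - d' ^ 2))
          + 2 * (d - d')| := by unfold Afun; ring_nf
    _ ≤ (l ^ 2 - 1 / l ^ 2) * |√(ξ ^ 2 * η ^ 2 - d ^ 2) - √(ξ ^ 2 * η ^ 2 - d' ^ 2)|
          + 2 * |d - d'| := by
        refine (abs_add_le _ _).trans_eq ?_
        rw [abs_mul, abs_mul, abs_of_nonneg hM, abs_two]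
    _ ≤ _ := by gcongr

lemma abs_gfun_sub_gfun_le (ξ η d d' : ℝ) :
    |gfun l ξ η d - gfun l ξ η d'| ≤ modulusD l d d' := by
  calc |gfun l ξ η d - gfun l ξ η d'| = |-(2 * (√(Afun l ξ η d) - √(Afun l ξ η d')))| := by
        unfold gfun; ring_nf
    _ = 2 * |√(Afun l ξ η d) - √(Afun l ξ η d')| := by rw [abs_neg, abs_mul, abs_two]
    _ ≤ 2 * √|Afun l ξ η d - Afun l ξ η d'| := by gcongr; exact abs_sqrt_sub_sqrt_le _ _
    _ ≤ modulusD l d d' := by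
        unfold modulusD
        gcongr
        exact abs_Afun_sub_Afun_le hl ξ η d d'

lemma hfun_le_hfun_add_modulusD {x y : ℝ} (hx : 0 ≤ x) (hy : 0 ≤ y) (d d' : ℝ) :
    hfun l x y d ≤ hfun l x y d' + modulusD l d d' := by
  have key : hfun l x y d - modulusD l d d' ≤ hfun l x y d' := by
    refine le_hfun fun ξ η hξ hη => ?_
    have := hfun_le_gfun hl hx hy hξ hη (d := d)
    have := (abs_le.1 (abs_gfun_sub_gfun_le hl ξ η d d')).2
    linarith
  linarith

lemma abs_hfun_sub_hfun_le_d {x y : ℝ} (hx : 0 ≤ x) (hy : 0 ≤ y) (d d' : ℝ) :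
    |hfun l x y d - hfun l x y d'| ≤ modulusD l d d' := by
  have := hfun_le_hfun_add_modulusD hl hx hy d d'
  have := hfun_le_hfun_add_modulusD hl hx hy d' d
  rw [modulusD_comm] at this
  rw [abs_le]
  constructor <;> linarith

theorem continuousOn_hfun :
    ContinuousOn (fun p : ℝ × ℝ × ℝ => hfun l p.1 p.2.1 p.2.2) {p | 0 ≤ p.1 ∧ 0 ≤ p.2.1} := by
  rintro ⟨x₀, y₀, d₀⟩ ⟨hx₀, hy₀⟩
  refine continuousWithinAt_of_abs_sub_le
    (B := fun p => |p.1 ^ 2 - x₀ ^ 2| + |p.2.1 ^ 2 - y₀ ^ 2| + modulusD l p.2.2 d₀)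
    (by unfold modulusD; fun_prop) (by simp [modulusD]) ?_
  rintro ⟨x, y, d⟩ ⟨hx, hy⟩
  calc |hfun l x y d - hfun l x₀ y₀ d₀|
      ≤ |hfun l x y d - hfun l x₀ y₀ d| + |hfun l x₀ y₀ d - hfun l x₀ y₀ d₀| := abs_sub_le _ _ _
    _ ≤ _ := add_le_add (abs_hfun_sub_hfun_le_xy hl hx hx₀ hy hy₀)
        (abs_hfun_sub_hfun_le_d hl hx₀ hy₀ d d₀)

end

/-- The function `h(x,y,d) = inf{ g(ξ,η,d) : ξ ≥ x, η ≥ y }` is continuous on the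
set `Ō = {(x,y,d) : x ≥ 0, y ≥ 0, xy ≥ |d|}`. -/
theorem h_continuousOn (l : ℝ) (hl : 1 < l) :
    ContinuousOn (fun p : ℝ × ℝ × ℝ => hfun l p.1 p.2.1 p.2.2)
      {p : ℝ × ℝ × ℝ | 0 ≤ p.1 ∧ 0 ≤ p.2.1 ∧ |p.2.2| ≤ p.1 * p.2.1} :=
  (continuousOn_hfun hl.le).mono fun _ hp => ⟨hp.1, hp.2.1⟩
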